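/- arXiv:2405.12047 — 3 statements merged into one kernel-verified Lean document; each statement's English description precedes it below -/
import Mathlib

section
/- In the surjection operad over Z/2, let U = (1,3,1,2) + (1,2,3,2) + (1,2,3,1) + (3,2,3,1) + (3,1,2,1) ∈ X(3)_1. Then U is a cycle: dU = 0. -/
/- The surjection operad over Z/2 (Berger–Fresse).  Elements of X(r)_d are Z/2-linear
combinations of non-degenerate surjections u : {1,…,r+d} → {1,…,r}, encoded as lists;
degenerate (two equal adjacent entries) or non-surjective lists represent 0. -/

noncomputable section

/-- Formal Z/2-linear combinations of sequences. -/
abbrev El := List ℕ →₀ ZMod 2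

/-- Non-degenerate: no two equal adjacent entries. -/
def Nondeg (u : List ℕ) : Prop := List.Chain' (· ≠ ·) u

instance : DecidablePred Nondeg := fun u => by unfold Nondeg List.Chain'; infer_instance

/-- `u` is a surjection onto {1,…,r}. -/
def IsSurj (r : ℕ) (u : List ℕ) : Prop :=
  (∀ k < r, (k + 1) ∈ u) ∧ ∀ x ∈ u, 0 < x ∧ x ≤ r

instance (r : ℕ) : DecidablePred (IsSurj r) := fun u => by unfold IsSurj; infer_instance

/-- The basis element of X(r) given by `u`, or 0 if degenerate/non-surjective. -/
def gen (r : ℕ) (u : List ℕ) : El :=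
  if Nondeg u ∧ IsSurj r u then Finsupp.single u 1 else 0

/-- The differential: delete one entry at a time (signs trivial mod 2). -/
def diffOf (r : ℕ) (u : List ℕ) : El :=
  ∑ i ∈ Finset.range u.length, gen r (u.eraseIdx i)

/-- The differential on X(r), extended linearly. -/
def D (r : ℕ) (x : El) : El := x.sum fun u c => c • diffOf r u

/-- All order-preserving splittings of `v` into `n` overlapping consecutive blocks. -/
def splits : ℕ → List ℕ → List (List (List ℕ))
  | 0, _ => []
  | 1, v => [[v]]
  | n + 2, v =>
      (List.range v.length).flatMap fun i =>
        (splits (n + 1) (v.drop i)).map fun rest => (v.take (i + 1)) :: rest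

/-- Substitute the successive occurrences of `k` in a list by the successive blocks. -/
def substAux (k : ℕ) : List ℕ → List (List ℕ) → List ℕ
  | [], _ => []
  | x :: xs, bs =>
      if x = k then bs.headD [] ++ substAux k xs bs.tail else x :: substAux k xs bs

/-- Operadic composition `u ∘ₖ v` in the surjection operad, for `u ∈ X(r)`, `v ∈ X(s)`:
entries of `u` greater than `k` are increased by `s − 1`, entries of `v` by `k − 1`,
and the occurrences of `k` in `u` are replaced by the blocks of all splittings of `v`. -/
def comp (r s k : ℕ) (u v : List ℕ) : El :=
  let u' := u.map fun x => if k < x then x + s - 1 else x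
  let v' := v.map (· + (k - 1))
  ((splits (u.count k) v').map fun bs => gen (r + s - 1) (substAux k u' bs)).sum

end

/- STATEMENT 6: U = (1,3,1,2) + (1,2,3,2) + (1,2,3,1) + (3,2,3,1) + (3,1,2,1) ∈ X(3)₁
is a cycle: dU = 0. -/

noncomputable def U : El :=
  Finsupp.single [1, 3, 1, 2] 1 + Finsupp.single [1, 2, 3, 2] 1 +
    Finsupp.single [1, 2, 3, 1] 1 + Finsupp.single [3, 2, 3, 1] 1 +
    Finsupp.single [3, 1, 2, 1] 1

/- Each of the five surjections in `U` has exactly two faces that are non-degenerate surjections,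
and these faces link the five terms into the cycle
(3,1,2) – (1,3,2) – (1,2,3) – (2,3,1) – (3,2,1) – (3,1,2).
So every face occurs twice in `dU` and cancels mod 2. -/

lemma D_eq_linearCombination (r : ℕ) : D r = Finsupp.linearCombination (ZMod 2) (diffOf r) := rfl

lemma gen_of_valid {r : ℕ} {u : List ℕ} (h : Nondeg u ∧ IsSurj r u) :
    gen r u = Finsupp.single u 1 :=
  if_pos h

lemma gen_of_not_valid {r : ℕ} {u : List ℕ} (h : ¬(Nondeg u ∧ IsSurj r u)) : gen r u = 0 :=
  if_neg h

lemma diffOf_of_length_four (r a b c d : ℕ) :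
    diffOf r [a, b, c, d] =
      gen r [b, c, d] + gen r [a, c, d] + gen r [a, b, d] + gen r [a, b, c] := by
  simp [diffOf, Finset.sum_range_succ]

lemma diffOf_1312 :
    diffOf 3 [1, 3, 1, 2] = Finsupp.single [3, 1, 2] 1 + Finsupp.single [1, 3, 2] 1 := by
  rw [diffOf_of_length_four, gen_of_valid (by decide), gen_of_not_valid (by decide),
    gen_of_valid (by decide), gen_of_not_valid (by decide), add_zero, add_zero]

lemma diffOf_1232 :
    diffOf 3 [1, 2, 3, 2] = Finsupp.single [1, 3, 2] 1 + Finsupp.single [1, 2, 3] 1 := by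
  rw [diffOf_of_length_four, gen_of_not_valid (by decide), gen_of_valid (by decide),
    gen_of_not_valid (by decide), gen_of_valid (by decide), zero_add, add_zero]

lemma diffOf_1231 :
    diffOf 3 [1, 2, 3, 1] = Finsupp.single [1, 2, 3] 1 + Finsupp.single [2, 3, 1] 1 := by
  rw [diffOf_of_length_four, gen_of_valid (by decide), gen_of_not_valid (by decide),
    gen_of_not_valid (by decide), gen_of_valid (by decide), add_zero, add_zero, add_comm]

lemma diffOf_3231 :
    diffOf 3 [3, 2, 3, 1] = Finsupp.single [2, 3, 1] 1 + Finsupp.single [3, 2, 1] 1 := by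
  rw [diffOf_of_length_four, gen_of_valid (by decide), gen_of_not_valid (by decide),
    gen_of_valid (by decide), gen_of_not_valid (by decide), add_zero, add_zero]

lemma diffOf_3121 :
    diffOf 3 [3, 1, 2, 1] = Finsupp.single [3, 2, 1] 1 + Finsupp.single [3, 1, 2] 1 := by
  rw [diffOf_of_length_four, gen_of_not_valid (by decide), gen_of_valid (by decide),
    gen_of_not_valid (by decide), gen_of_valid (by decide), zero_add, add_zero]

lemma cyclic_sum_add_eq_zero {G : Type*} [AddCommGroup G] [Module (ZMod 2) G] (a b c d e : G) :
    (a + b) + (b + c) + (c + d) + (d + e) + (e + a) = 0 := by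
  rw [show (a + b) + (b + c) + (c + d) + (d + e) + (e + a) =
      (a + a) + (b + b) + (c + c) + (d + d) + (e + e) by abel]
  simp only [ZModModule.add_self]

theorem U_is_cycle : D 3 U = 0 := by
  simp only [U, D_eq_linearCombination, map_add, Finsupp.linearCombination_single, one_smul,
    diffOf_1312, diffOf_1232, diffOf_1231, diffOf_3231, diffOf_3121]
  exact cyclic_sum_add_eq_zero _ _ _ _ _
end

section
/- Let S² be the simplicial set Δ²/∂Δ², with normalized chain complex N_•(S²; Z/2) having basis {e₀ in degree 0, e₂ in degree 2} and zero differential. The interval cut operation of the surjection (3,1,2,3,1) applied to e₂ equals e₂ ⊗ e₀ ⊗ e₂ in N_•(S²)^{⊗3} (mod 2). -/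
/- The interval cut operation (Berger–Fresse) for the simplicial set S² = Δ²/∂Δ²,
whose normalized Z/2-chains have basis e₀ (degree 0) and e₂ (degree 2) with zero
differential.  A surjection u ∈ X(3)_d acts on a t-simplex (t = 2 for e₂, t = 0 for
e₀) by summing over all interval cuts of [0,t]: choices of cut points
0 ≤ n₁ ≤ … ≤ n_m ≤ t (m = length u − 1) dividing [0,t] into consecutive intervals
overlapping at their endpoints; the factor labelled j is the face of the simplex
spanned by the concatenation of the intervals labelled j.  In Δ²/∂Δ² a vertex list
gives e₀ if it is a single vertex, e₂ if it is (0,1,2), and 0 otherwise (degenerate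
simplices and the collapsed boundary faces vanish in normalized chains). -/

noncomputable section

/-- Triple tensor power of N_•(S²;Z/2), as functions on the basis {e₀,e₂}³
(`false` = e₀, `true` = e₂). -/
abbrev C3 := Bool × Bool × Bool → ZMod 2

/-- The basis element `ea ⊗ eb ⊗ ec` of `C3`. -/
def basis3 (a b c : Bool) : C3 := fun x => if x = (a, b, c) then 1 else 0

/-- All lists of `m` cut points with values in `[0, t]`. -/
def cutLists : ℕ → ℕ → List (List ℕ)
  | _, 0 => [[]]
  | t, m + 1 => (List.range (t + 1)).flatMap fun a => (cutLists t m).map fun l => a :: l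

/-- The nondecreasing ones. -/
def cutsMono (t m : ℕ) : List (List ℕ) :=
  (cutLists t m).filter fun l => decide (List.IsChain (· ≤ ·) l)

/-- The consecutive intervals (as vertex lists, overlapping at endpoints) determined
by the cut points `c` of `[0, t]`. -/
def pieces (t : ℕ) (c : List ℕ) : List (List ℕ) :=
  let bds := 0 :: c ++ [t]
  (bds.zip bds.tail).map fun p => List.range' p.1 (p.2 + 1 - p.1)

/-- The vertex list of the face labelled `j` under the surjection `u`. -/
def labelFace (u : List ℕ) (ps : List (List ℕ)) (j : ℕ) : List ℕ :=
  ((((u.zip ps).filter fun p => p.1 = j)).map Prod.snd).flatten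

/-- The value of a vertex list in N_•(S²;Z/2): a single vertex gives e₀ (`false`),
the full simplex (0,1,2) gives e₂ (`true`), and anything else is 0 (`none`). -/
def faceVal (l : List ℕ) : Option Bool :=
  if l.length = 1 then some false else if l = [0, 1, 2] then some true else none

/-- The contribution of one interval cut `c` for the surjection `u` on the t-simplex. -/
def cutTerm (t : ℕ) (u c : List ℕ) : C3 :=
  let ps := pieces t c
  match faceVal (labelFace u ps 1), faceVal (labelFace u ps 2), faceVal (labelFace u ps 3) with
  | some a, some b, some c' => basis3 a b c'
  | _, _, _ => 0

/-- The interval cut operation of the surjection `u ∈ X(3)` on the generating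
t-simplex of S² (t = 2: e₂; t = 0: e₀), with values in N_•(S²;Z/2)^{⊗3}. -/
def AW3 (u : List ℕ) (t : ℕ) : C3 :=
  ((cutsMono t (u.length - 1)).map (cutTerm t u)).sum

end

/- Writing the four cut points of `[0,2]` as `n₁ ≤ n₂ ≤ n₃ ≤ n₄`, the face labelled 2 is the
single interval `[n₂,n₃]`, so it must be a vertex, while the faces labelled 1 and 3 are each the
concatenation of two intervals, so they have at least two vertices and must be `(0,1,2)`. Face 1
is `[n₁,n₂] ++ [n₄,2]` and face 3 is `[0,n₁] ++ [n₃,n₄]`; together these force the single cut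
`(0,1,1,2)`, which contributes `e₂ ⊗ e₀ ⊗ e₂`. -/

lemma nodup_cutLists (t : ℕ) : ∀ m, (cutLists t m).Nodup
  | 0 => List.nodup_singleton _
  | m + 1 => by
    refine List.nodup_flatMap.2 ⟨fun a _ => (nodup_cutLists t m).map List.cons_injective,
      List.nodup_range.pairwise_of_forall_ne fun a _ b _ hab => ?_⟩
    simp only [Function.onFun, List.disjoint_left, List.mem_map]
    rintro _ ⟨l, -, rfl⟩ ⟨l', -, hl'⟩
    exact hab (List.cons_eq_cons.1 hl').1.symm

lemma nodup_cutsMono (t m : ℕ) : (cutsMono t m).Nodup :=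
  (nodup_cutLists t m).filter _

lemma cutTerm_31231_eq_zero_of_ne :
    ∀ c ∈ cutsMono 2 4, c ≠ [0, 1, 1, 2] → cutTerm 2 [3, 1, 2, 3, 1] c = 0 := by
  decide

lemma cutTerm_31231_0112 : cutTerm 2 [3, 1, 2, 3, 1] [0, 1, 1, 2] = basis3 true false true := rfl

theorem interval_cut_31231 :
    AW3 [3, 1, 2, 3, 1] 2 = basis3 true false true := by
  show ((cutsMono 2 4).map (cutTerm 2 [3, 1, 2, 3, 1])).sum = _
  have hmem : [0, 1, 1, 2] ∈ cutsMono 2 4 := by decide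
  -- `List.sum_map_eq_nsmul_single` counts with the `DecidableEq` instance, not `List.instBEq`.
  rw [List.sum_map_eq_nsmul_single [0, 1, 1, 2] _
      fun c hne hc => cutTerm_31231_eq_zero_of_ne c hc hne,
    @List.count_eq_one_of_mem _ instBEqOfDecidableEq _ _ _ (nodup_cutsMono 2 4) hmem, one_smul,
    cutTerm_31231_0112]
end

section
/- Let A = Z/2[α]/(α²) (deg α = 2) with the Poincaré pairing ⟨−,−⟩: A ⊗ A → Z/2 given by ⟨1,α⟩ = ⟨α,1⟩ = 1, ⟨1,1⟩ = ⟨α,α⟩ = 0. Then the bimodule map with higher homotopies F on A determined by the components F_{0,0}(1⊗a⊗1⊗b) = ⟨a,b⟩ and F_{2,0}(α⊗α⊗1⊗1) = 1 (all other components of F_{p,q} on basis elements zero) corresponds, under the identification of homotopy inner products with functionals on the cyclic bar complex, to the functional W: B^cyc(A) → Z/2 with W(α) = 1, W(1⊗α⊗α) = 1, and W = 0 on all other normalized basis chains. -/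
/- STATEMENT 17: Let A = Z/2[α]/(α²) (deg α = 2) with Poincaré pairing
⟨1,α⟩ = ⟨α,1⟩ = 1, ⟨1,1⟩ = ⟨α,α⟩ = 0.  The bimodule map with higher homotopies
(homotopy inner product) F on A with components F_{0,0}(1⊗a⊗1⊗b) = ⟨a,b⟩ and
F_{2,0}(α⊗α⊗1⊗1) = 1 (all other components on basis elements zero) corresponds,
under the identification of homotopy inner products with functionals on the cyclic
bar complex, to the functional W : B^cyc(A) → Z/2 with W(α) = 1, W(1⊗α⊗α) = 1 and
W = 0 on all other normalized basis chains.

Model: A := DualNumber (ZMod 2).  The normalized cyclic bar complex has basis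
(n, false) ↔ 1 ⊗ α^{⊗n}, (n, true) ↔ α ⊗ α^{⊗n}; total space T := (ℕ×Bool) →₀ ZMod 2.
Since Ā = Z/2·α, a homotopy inner product with F_{p,q} = 0 for q ≠ 0 is determined by
its values F_{p,q}(α^{⊗p} ⊗ a ⊗ α^{⊗q} ⊗ b) =: F p q a b.  Under the identification
(tensor–hom adjunction followed by the quasi-isomorphism
(B(A,A,A) ⊗_A B(A,A,A)) ⊗_{A^e} A → B^cyc(A) collapsing the second bar factor by its
augmentation) the functional W induces the homotopy inner product
(p, q, a, b) ↦ if q = 0 then W((a·b) ⊗ α^{⊗p}) else 0. -/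

open DualNumber TrivSqZeroExt

noncomputable section

abbrev A := DualNumber (ZMod 2)

abbrev T := (ℕ × Bool) →₀ ZMod 2

def toT (n : ℕ) (x : A) : T :=
  Finsupp.single (n, false) x.fst + Finsupp.single (n, true) x.snd

/-- The functional W on the cyclic bar complex: W(α) = W(1⊗α⊗α) = 1, else 0. -/
def W : T →ₗ[ZMod 2] ZMod 2 :=
  Finsupp.lapply (0, true) + Finsupp.lapply (2, false)

/-- The given homotopy inner product: `givenF p q a b` is the value
F_{p,q}(α^{⊗p} ⊗ a ⊗ α^{⊗q} ⊗ b).  F_{0,0}(1⊗a⊗1⊗b) = ⟨a,b⟩ (Poincaré pairing) and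
F_{2,0}(α⊗α⊗1⊗1) = 1; all other components on basis elements vanish. -/
def givenF : ℕ → ℕ → A → A → ZMod 2
  | 0, 0, a, b => a.fst * b.snd + a.snd * b.fst
  | 2, 0, a, b => a.fst * b.fst
  | _, _, _, _ => 0

/-- The homotopy inner product induced by the functional W under the identification:
collapse the second bar factor by the augmentation and read off the cyclic chain
(a·b) ⊗ α^{⊗p}. -/
def inducedF (p q : ℕ) (a b : A) : ZMod 2 :=
  if q = 0 then W (toT p (a * b)) else 0

/-- The given homotopy inner product corresponds to the functional W. -/
theorem homotopy_inner_product_corresponds : givenF = inducedF := by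
  funext p q a b
  simp only [inducedF, W, toT, Finsupp.add_apply, LinearMap.add_apply, Finsupp.lapply_apply,
    Finsupp.single_apply, map_add]
  rcases q with _ | q
  · rcases p with _ | _ | _ | p <;>
      simp [givenF, TrivSqZeroExt.fst_mul, DualNumber.snd_mul, mul_comm]
  · cases p with
    | zero => simp [givenF]
    | succ n => cases n with
      | zero => simp [givenF]
      | succ m => cases m with
        | zero => simp [givenF]
        | succ k => simp [givenF]

end
end
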